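/- arXiv:1408.5993 — 2 statements merged into one kernel-verified Lean document; each statement's English description precedes it below -/
import Mathlib

section
/- The two-variable interpolation Jack polynomial P^ip_{(m_1,m_2)}(x_1,x_2;τ) = (-1)^{m_1+m_2} (-x_1)_{m_2} (-x_2)_{m_1} ₃F₂(-m_1+m_2, τ, -m_1+1-τ+x_1; 1-m_1+m_2-τ, -m_1+1+x_2; 1) arises as the q ↑ 1 limit: lim_{q↑1} (q-1)^{-(m_1+m_2)} P^ip_{(m_1,m_2)}(q^{x_1}, q^{x_2}; q, q^τ) where P^ip_{(m_1,m_2)}(x_1,x_2;q,t) := x_1^{m_2} x_2^{m_1} (x_1^{-1};q)_{m_2} (x_2^{-1};q)_{m_1} ₃φ₂(q^{-m_1+m_2}, t, q^{-m_1+1}t^{-1}x_1; q^{1-m_1+m_2}t^{-1}, q^{-m_1+1}x_2; q, q). -/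
/-- The `q`-shifted factorial `(a;q)_k`. -/
def qPoch (q a : ℝ) (k : ℕ) : ℝ := ∏ i ∈ Finset.range k, (1 - a * q ^ i)

/-- The Pochhammer symbol `(a)_k`. -/
def poch (a : ℝ) (k : ℕ) : ℝ := ∏ i ∈ Finset.range k, (a + i)

/-!
Every `q`-shifted factorial in the formula has the form `(q^a;q)_k = (1-q)^k ∏_{i<k} [a+i]_q`
with the `q`-number `[a]_q = (q^a-1)/(q-1)`, and `[a]_q → a` as `q → 1` because this is a
difference quotient of `q ↦ q^a` at `1`. The powers of `1-q` cancel in each term of the `₃φ₂`,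
which therefore tends to the corresponding term of the `₃F₂` provided the lower Pochhammer
symbols do not vanish; the prefactor `y^m (y⁻¹;q)_m = ∏_{i<m} (y - q^i)` at `y = q^x` contributes
`(q-1)^m ∏_{i<m} (x-i) = (q-1)^m (-1)^m (-x)_m` to leading order.
-/

open Filter Finset Topology

noncomputable def qNum (q a : ℝ) : ℝ := (q ^ a - 1) / (q - 1)

noncomputable def qAnalogPoch (q a : ℝ) (k : ℕ) : ℝ := ∏ i ∈ range k, qNum q (a + i)

theorem poch_ne_zero_iff {a : ℝ} {k : ℕ} : poch a k ≠ 0 ↔ ∀ i < k, a + i ≠ 0 := by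
  simp [poch, prod_ne_zero_iff]

theorem neg_one_pow_mul_poch_neg (x : ℝ) (m : ℕ) :
    (-1) ^ m * poch (-x) m = ∏ i ∈ range m, (x - i) := by
  rw [poch, pow_eq_prod_const, ← prod_mul_distrib]
  exact prod_congr rfl fun i _ => by ring

theorem eventually_pos_ne_one : ∀ᶠ q in 𝓝[≠] (1 : ℝ), 0 < q ∧ q ≠ 1 :=
  (eventually_nhdsWithin_of_eventually_nhds (eventually_gt_nhds one_pos)).and
    self_mem_nhdsWithin

theorem tendsto_qNum (a : ℝ) : Tendsto (qNum · a) (𝓝[≠] 1) (𝓝 a) := by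
  have h : HasDerivAt (fun q : ℝ => q ^ a) a 1 := by
    simpa using Real.hasDerivAt_rpow_const (x := 1) (p := a) (Or.inl one_ne_zero)
  refine (hasDerivAt_iff_tendsto_slope.mp h).congr fun q => ?_
  simp [slope_def_field, qNum]

theorem tendsto_qAnalogPoch (a : ℝ) (k : ℕ) :
    Tendsto (qAnalogPoch · a k) (𝓝[≠] 1) (𝓝 (poch a k)) :=
  tendsto_finsetProd _ fun i _ => tendsto_qNum (a + i)

theorem qPoch_rpow {q : ℝ} (hq : 0 < q) (hq1 : q ≠ 1) (a : ℝ) (k : ℕ) :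
    qPoch q (q ^ a) k = (1 - q) ^ k * qAnalogPoch q a k := by
  rw [qPoch, qAnalogPoch, pow_eq_prod_const, ← prod_mul_distrib]
  refine prod_congr rfl fun i _ => ?_
  rw [qNum, ← Real.rpow_natCast q i, ← Real.rpow_add hq]
  field_simp [sub_ne_zero.mpr hq1]
  ring

theorem qPoch_self {q : ℝ} (hq : 0 < q) (hq1 : q ≠ 1) (k : ℕ) :
    qPoch q q k = (1 - q) ^ k * qAnalogPoch q 1 k := by
  simpa using qPoch_rpow hq hq1 1 k

theorem pow_mul_qPoch_inv {y : ℝ} (hy : y ≠ 0) (q : ℝ) (m : ℕ) :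
    y ^ m * qPoch q y⁻¹ m = ∏ i ∈ range m, (y - q ^ i) := by
  rw [qPoch, pow_eq_prod_const, ← prod_mul_distrib]
  refine prod_congr rfl fun i _ => ?_
  field_simp

theorem tendsto_rpow_pow_mul_qPoch_inv_div (x : ℝ) (m : ℕ) :
    Tendsto (fun q : ℝ => (q ^ x) ^ m * qPoch q (q ^ x)⁻¹ m / (q - 1) ^ m) (𝓝[≠] 1)
      (𝓝 ((-1) ^ m * poch (-x) m)) := by
  rw [neg_one_pow_mul_poch_neg]
  refine (tendsto_finsetProd _ fun (i : ℕ) _ => (tendsto_qNum x).sub (tendsto_qNum i)).congr' ?_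
  filter_upwards [eventually_pos_ne_one] with q ⟨hq, _⟩
  rw [pow_mul_qPoch_inv (Real.rpow_pos_of_pos hq x).ne', pow_eq_prod_const, ← prod_div_distrib]
  refine prod_congr rfl fun i _ => ?_
  rw [qNum, qNum, Real.rpow_natCast, ← sub_div]
  ring_nf

theorem mul_div_mul_cancel_three {s : ℝ} (hs : s ≠ 0) (a b c d e f : ℝ) :
    s * a * (s * b) * (s * c) / (s * d * (s * e) * (s * f)) = a * b * c / (d * e * f) := by
  rw [show s * a * (s * b) * (s * c) = s ^ 3 * (a * b * c) by ring,
    show s * d * (s * e) * (s * f) = s ^ 3 * (d * e * f) by ring,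
    mul_div_mul_left _ _ (pow_ne_zero 3 hs)]

theorem tendsto_qHypergeometric_term (a b c d e : ℝ) {k : ℕ} (hd : poch d k ≠ 0)
    (he : poch e k ≠ 0) :
    Tendsto (fun q : ℝ => qPoch q (q ^ a) k * qPoch q (q ^ b) k * qPoch q (q ^ c) k /
        (qPoch q (q ^ d) k * qPoch q (q ^ e) k * qPoch q q k) * q ^ k) (𝓝[≠] 1)
      (𝓝 (poch a k * poch b k * poch c k / (poch d k * poch e k * poch 1 k))) := by
  have h1 : poch 1 k ≠ 0 := poch_ne_zero_iff.mpr fun i _ => by positivity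
  have hpow : Tendsto (fun q : ℝ => q ^ k) (𝓝[≠] 1) (𝓝 1) := by
    simpa using ((continuous_pow k).tendsto (1 : ℝ)).mono_left nhdsWithin_le_nhds
  have hlim := ((((tendsto_qAnalogPoch a k).mul (tendsto_qAnalogPoch b k)).mul
    (tendsto_qAnalogPoch c k)).div (((tendsto_qAnalogPoch d k).mul
    (tendsto_qAnalogPoch e k)).mul (tendsto_qAnalogPoch 1 k))
    (mul_ne_zero (mul_ne_zero hd he) h1)).mul hpow
  rw [mul_one] at hlim
  refine hlim.congr' ?_
  filter_upwards [eventually_pos_ne_one] with q ⟨hq, hq1⟩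
  simp only [Pi.div_apply, qPoch_rpow hq hq1, qPoch_self hq hq1]
  rw [mul_div_mul_cancel_three (pow_ne_zero k (sub_ne_zero.mpr hq1.symm))]

theorem tendsto_sum_qHypergeometric_term (a b c d e : ℝ) {n : ℕ}
    (hde : ∀ k < n, poch d k ≠ 0 ∧ poch e k ≠ 0) :
    Tendsto (fun q : ℝ => ∑ k ∈ range n, qPoch q (q ^ a) k * qPoch q (q ^ b) k *
        qPoch q (q ^ c) k / (qPoch q (q ^ d) k * qPoch q (q ^ e) k * qPoch q q k) * q ^ k)
      (𝓝[≠] 1)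
      (𝓝 (∑ k ∈ range n, poch a k * poch b k * poch c k /
        (poch d k * poch e k * poch 1 k))) :=
  tendsto_finsetSum _ fun k hk =>
    have hk' := hde k (mem_range.mp hk)
    tendsto_qHypergeometric_term a b c d e hk'.1 hk'.2

/-- The two-variable interpolation Jack polynomial
`P^ip_{(m₁,m₂)}(x₁,x₂;τ) = (-1)^{m₁+m₂}(-x₁)_{m₂}(-x₂)_{m₁}
  ₃F₂(-m₁+m₂, τ, -m₁+1-τ+x₁; 1-m₁+m₂-τ, -m₁+1+x₂; 1)`
is the `q ↑ 1` limit of `(q-1)^{-(m₁+m₂)} P^ip_{(m₁,m₂)}(q^{x₁},q^{x₂};q,q^τ)`, where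
`P^ip_{(m₁,m₂)}(y₁,y₂;q,t) = y₁^{m₂} y₂^{m₁} (y₁⁻¹;q)_{m₂}(y₂⁻¹;q)_{m₁}
  ₃φ₂(q^{-m₁+m₂}, t, q^{-m₁+1}t⁻¹y₁; q^{1-m₁+m₂}t⁻¹, q^{-m₁+1}y₂; q, q)`. -/
theorem interpolation_jack_two_var_as_limit (τ x₁ x₂ : ℝ) (hτ : 0 < τ)
    (m₁ m₂ : ℕ) (h : m₂ ≤ m₁)
    (hx₂ : ∀ i : ℕ, i < m₁ - m₂ → (1 : ℝ) - m₁ + x₂ + i ≠ 0) :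
    Filter.Tendsto
      (fun q : ℝ =>
        ((q - 1) ^ (m₁ + m₂))⁻¹ *
          ((q ^ x₁) ^ m₂ * (q ^ x₂) ^ m₁ *
            qPoch q ((q ^ x₁)⁻¹) m₂ * qPoch q ((q ^ x₂)⁻¹) m₁ *
            ∑ k ∈ Finset.range (m₁ - m₂ + 1),
              qPoch q (q ^ (-(m₁ : ℝ) + m₂)) k * qPoch q (q ^ τ) k *
                  qPoch q (q ^ (-(m₁ : ℝ) + 1) * (q ^ τ)⁻¹ * q ^ x₁) k /
                (qPoch q (q ^ ((1 : ℝ) - m₁ + m₂) * (q ^ τ)⁻¹) k *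
                  qPoch q (q ^ (-(m₁ : ℝ) + 1) * q ^ x₂) k * qPoch q q k) *
                q ^ k))
      (nhdsWithin 1 (Set.Ioo (0 : ℝ) 1))
      (nhds ((-1 : ℝ) ^ (m₁ + m₂) * poch (-x₁) m₂ * poch (-x₂) m₁ *
        ∑ k ∈ Finset.range (m₁ - m₂ + 1),
          poch (-(m₁ : ℝ) + m₂) k * poch τ k * poch (-(m₁ : ℝ) + 1 - τ + x₁) k /
            (poch (1 - (m₁ : ℝ) + m₂ - τ) k * poch (-(m₁ : ℝ) + 1 + x₂) k * poch 1 k))) := by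
  have hden : ∀ k < m₁ - m₂ + 1,
      poch (1 - (m₁ : ℝ) + m₂ - τ) k ≠ 0 ∧ poch (-(m₁ : ℝ) + 1 + x₂) k ≠ 0 := by
    refine fun k hk => ⟨poch_ne_zero_iff.mpr fun i hi => ?_, poch_ne_zero_iff.mpr fun i hi => ?_⟩
    · have : (i : ℝ) + 1 ≤ m₁ - m₂ := by
        rw [← Nat.cast_sub h]; exact_mod_cast (by omega : i + 1 ≤ m₁ - m₂)
      linarith
    · convert hx₂ i (by omega) using 1; ring
  have hlim := ((tendsto_rpow_pow_mul_qPoch_inv_div x₁ m₂).mul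
    (tendsto_rpow_pow_mul_qPoch_inv_div x₂ m₁)).mul
    (tendsto_sum_qHypergeometric_term (-(m₁ : ℝ) + m₂) τ (-(m₁ : ℝ) + 1 - τ + x₁) _ _ hden)
  rw [show (-1 : ℝ) ^ (m₁ + m₂) * poch (-x₁) m₂ * poch (-x₂) m₁
      = (-1) ^ m₂ * poch (-x₁) m₂ * ((-1) ^ m₁ * poch (-x₂) m₁) by ring]
  refine (hlim.mono_left (nhdsWithin_mono _ fun q hq => hq.2.ne)).congr' ?_
  filter_upwards [self_mem_nhdsWithin] with q ⟨hq, _⟩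
  have hc : q ^ (-(m₁ : ℝ) + 1 - τ + x₁) = q ^ (-(m₁ : ℝ) + 1) * (q ^ τ)⁻¹ * q ^ x₁ := by
    rw [← Real.rpow_neg hq.le, ← Real.rpow_add hq, ← Real.rpow_add hq, sub_eq_add_neg]
  have hd : q ^ (1 - (m₁ : ℝ) + m₂ - τ) = q ^ ((1 : ℝ) - m₁ + m₂) * (q ^ τ)⁻¹ := by
    rw [← Real.rpow_neg hq.le, ← Real.rpow_add hq, sub_eq_add_neg]
  have he : q ^ (-(m₁ : ℝ) + 1 + x₂) = q ^ (-(m₁ : ℝ) + 1) * q ^ x₂ := Real.rpow_add hq _ _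
  simp only [hc, hd, he]
  ring
end

section
/- For partitions λ of length ≤ 2 with λ = (m_1, m_2), the reduction formula for BC_2-type interpolation Jack polynomials holds: P^ip_{(m_1,m_2)}(x_1,x_2; τ, α) = (α+x_1)_{m_2}(α-x_1)_{m_2}(α+x_2)_{m_2}(α-x_2)_{m_2} · P^ip_{(m_1-m_2,0)}(x_1,x_2; τ, m_2+α), when both sides are defined via their explicit tableau-sum/hypergeometric formulas. -/
/-- The explicit `BC₂`-type interpolation Jack polynomial
`P^ip_{(m₁,m₂)}(x₁,x₂;τ,α) = (-1)^{m₁+m₂}(α+x₁,α-x₁,α+x₂,α-x₂)_{m₂}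
  (m₂+τ+α+x₁, m₂+τ+α-x₁)_{m₁-m₂}
  ₄F₃(-m₁+m₂, τ, m₂+α+x₂, m₂+α-x₂; 1-m₁+m₂-τ, m₂+τ+α+x₁, m₂+τ+α-x₁; 1)`. -/
noncomputable def PBCipJack (τ α x₁ x₂ : ℝ) (m₁ m₂ : ℕ) : ℝ :=
  (-1 : ℝ) ^ (m₁ + m₂) *
    (poch (α + x₁) m₂ * poch (α - x₁) m₂ * poch (α + x₂) m₂ * poch (α - x₂) m₂) *
    (poch ((m₂ : ℝ) + τ + α + x₁) (m₁ - m₂) * poch ((m₂ : ℝ) + τ + α - x₁) (m₁ - m₂)) *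
    ∑ k ∈ Finset.range (m₁ - m₂ + 1),
      poch (-(m₁ : ℝ) + m₂) k * poch τ k * poch ((m₂ : ℝ) + α + x₂) k *
          poch ((m₂ : ℝ) + α - x₂) k /
        (poch (1 - (m₁ : ℝ) + m₂ - τ) k * poch ((m₂ : ℝ) + τ + α + x₁) k *
          poch ((m₂ : ℝ) + τ + α - x₁) k * poch 1 k)

lemma poch_zero (a : ℝ) : poch a 0 = 1 := Finset.prod_range_zero _

lemma neg_one_pow_add_add_self (m n : ℕ) : (-1 : ℝ) ^ (m + n + m) = (-1) ^ n := by
  rw [add_right_comm, pow_add, ← two_mul, pow_mul, neg_one_sq, one_pow, one_mul]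

theorem bc2_interpolation_jack_reduction_general (τ α x₁ x₂ : ℝ)
    (m₁ m₂ : ℕ) (h : m₂ ≤ m₁) :
    PBCipJack τ α x₁ x₂ m₁ m₂ =
      poch (α + x₁) m₂ * poch (α - x₁) m₂ * poch (α + x₂) m₂ * poch (α - x₂) m₂ *
        PBCipJack τ ((m₂ : ℝ) + α) x₁ x₂ (m₁ - m₂) 0 := by
  obtain ⟨n, rfl⟩ := Nat.exists_eq_add_of_le h
  simp only [PBCipJack, Nat.add_sub_cancel_left, Nat.sub_zero, add_zero, neg_one_pow_add_add_self,
    poch_zero, mul_one, Nat.cast_add, Nat.cast_zero, zero_add]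
  have lower : -((m₂ : ℝ) + n) + m₂ = -n := by ring
  have denom : 1 - ((m₂ : ℝ) + n) + m₂ - τ = 1 - n - τ := by ring
  have shift_add : τ + ((m₂ : ℝ) + α) + x₁ = m₂ + τ + α + x₁ := by ring
  have shift_sub : τ + ((m₂ : ℝ) + α) - x₁ = m₂ + τ + α - x₁ := by ring
  rw [lower, denom, shift_add, shift_sub]
  ring

/-- The reduction formula for `BC₂`-type interpolation Jack polynomials:
`P^ip_{(m₁,m₂)}(x₁,x₂;τ,α)
  = (α+x₁)_{m₂}(α-x₁)_{m₂}(α+x₂)_{m₂}(α-x₂)_{m₂} P^ip_{(m₁-m₂,0)}(x₁,x₂;τ,m₂+α)`. -/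
theorem bc2_interpolation_jack_reduction (τ α x₁ x₂ : ℝ) (hτ : 0 < τ)
    (m₁ m₂ : ℕ) (h : m₂ ≤ m₁) :
    PBCipJack τ α x₁ x₂ m₁ m₂ =
      poch (α + x₁) m₂ * poch (α - x₁) m₂ * poch (α + x₂) m₂ * poch (α - x₂) m₂ *
        PBCipJack τ ((m₂ : ℝ) + α) x₁ x₂ (m₁ - m₂) 0 :=
  bc2_interpolation_jack_reduction_general τ α x₁ x₂ m₁ m₂ h
end
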